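/- There exists an absolute constant C > 0 such that for every nonnegative ω ∈ L¹(Π) ∩ L²(Π), the function 𝒢ω satisfies the uniform bound ‖𝒢ω‖_{L^∞(Π)} ≤ C ‖ω‖_{L¹(Π)}^{1/2} ‖ω‖_{L²(Π)}^{1/2}. -/

import Mathlib

open MeasureTheory Real Filter

noncomputable section

/-- The upper half plane `Π = {x ∈ ℝ² : x₂ > 0}`. -/
def UHP : Set (ℝ × ℝ) := {x | 0 < x.2}

/-- Euclidean norm of a point of `ℝ²`. -/
def rad (x : ℝ × ℝ) : ℝ := Real.sqrt (x.1 ^ 2 + x.2 ^ 2)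

/-- Modified Bessel function of the second kind of order `0`:
`K₀(r) = ∫₀^∞ exp(-r cosh t) dt`. -/
def K0 (r : ℝ) : ℝ := ∫ t in Set.Ioi (0 : ℝ), Real.exp (-(r * Real.cosh t))

/-- Fundamental solution `G(x,y) = (1/2π) K₀(|x-y|)` of `−Δ + Id` on `ℝ²`. -/
def Gker (x y : ℝ × ℝ) : ℝ := (1 / (2 * Real.pi)) * K0 (rad (x - y))

/-- Reflection `x̄ = (x₁, −x₂)` across the `x₁`-axis. -/
def reflPt (x : ℝ × ℝ) : ℝ × ℝ := (x.1, -x.2)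

/-- Green's function `G_Π(x,y) = G(x,y) − G(x̄,y)` of `−Δ + Id` on the half plane. -/
def GUHP (x y : ℝ × ℝ) : ℝ := Gker x y - Gker (reflPt x) y

/-- The operator `𝒢ω(x) = ∫_Π G_Π(x,y) ω(y) dy`. -/
def Gop (ω : ℝ × ℝ → ℝ) (x : ℝ × ℝ) : ℝ := ∫ y in UHP, GUHP x y * ω y

/-- Kinetic energy `E(ω) = (1/2) ∫_Π ω 𝒢ω`. -/
def kineticE (ω : ℝ × ℝ → ℝ) : ℝ := (1 / 2) * ∫ x in UHP, ω x * Gop ω x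

/-- Impulse `I(ω) = ∫_Π x₂ ω dx`. -/
def impulse (ω : ℝ × ℝ → ℝ) : ℝ := ∫ x in UHP, x.2 * ω x

/-- `L¹(Π)` norm. -/
def normL1 (f : ℝ × ℝ → ℝ) : ℝ := ∫ x in UHP, |f x|

/-- `L²(Π)` norm. -/
def normL2 (f : ℝ × ℝ → ℝ) : ℝ := (∫ x in UHP, (f x) ^ 2) ^ ((1 : ℝ) / 2)

/-- `L^s(Π)` norm. -/
def normLs (s : ℝ) (f : ℝ × ℝ → ℝ) : ℝ := (∫ x in UHP, |f x| ^ s) ^ (1 / s)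

/-- Nonnegative member of `L¹(Π) ∩ L²(Π)`. -/
def NonnegL1L2 (ω : ℝ × ℝ → ℝ) : Prop :=
  (∀ x ∈ UHP, 0 ≤ ω x) ∧ IntegrableOn ω UHP ∧ IntegrableOn (fun x => (ω x) ^ 2) UHP

/-- Steiner symmetry in the `x₁` variable. -/
def SteinerSym (f : ℝ × ℝ → ℝ) : Prop :=
  (∀ x : ℝ × ℝ, f (-x.1, x.2) = f x) ∧
  ∀ x₂ : ℝ, 0 < x₂ → AntitoneOn (fun x₁ => f (x₁, x₂)) (Set.Ioi (0 : ℝ))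

/-- The admissible class `𝒜_{μ,ν}`. -/
def InAdm (μ ν : ℝ) (ω : ℝ × ℝ → ℝ) : Prop :=
  (∀ x ∈ UHP, 0 ≤ ω x) ∧ IntegrableOn ω UHP ∧ IntegrableOn (fun x => (ω x) ^ 2) UHP ∧
  IntegrableOn (fun x => x.2 * ω x) UHP ∧
  impulse ω = μ ∧ (∫ x in UHP, ω x) ≤ ν

/-- The energy functional `ℰ_λ(ω) = E(ω) − (1/(2λ)) ∫_Π ω²`. -/
def Efun (lam : ℝ) (ω : ℝ × ℝ → ℝ) : ℝ :=
  kineticE ω - (1 / (2 * lam)) * ∫ x in UHP, (ω x) ^ 2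

/-- The supremum `S_{μ,ν,λ} = sup_{ω ∈ 𝒜_{μ,ν}} ℰ_λ(ω)`. -/
def Sval (lam μ ν : ℝ) : ℝ := sSup {s | ∃ ω, InAdm μ ν ω ∧ s = Efun lam ω}

/-- `ω` is a maximizer, i.e. `ω ∈ Σ_{μ,ν,λ}`. -/
def IsMaximizer (lam μ ν : ℝ) (ω : ℝ × ℝ → ℝ) : Prop :=
  InAdm μ ν ω ∧ Efun lam ω = Sval lam μ ν

/-- Bessel function of the first kind of order one. -/
def J1 (r : ℝ) : ℝ :=
  ∑' k : ℕ, ((-1 : ℝ) ^ k / ((Nat.factorial k : ℝ) * (Nat.factorial (k + 1) : ℝ))) *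
    (r / 2) ^ (2 * k + 1)

/-- Modified Bessel function of the second kind of order one. -/
def K1 (r : ℝ) : ℝ := ∫ t in Set.Ioi (0 : ℝ), Real.exp (-(r * Real.cosh t)) * Real.cosh t

/-- The set of `t > 0` with `J₁(√(λ−1) t) ≠ 0` solving the transcendental equation
`t (K₁'(t)/K₁(t) + (λ−1)^{-1/2} J₁'(√(λ−1)t)/J₁(√(λ−1)t)) = λ/(λ−1)`. -/
def aSet (lam : ℝ) : Set ℝ :=
  {t | 0 < t ∧ J1 (Real.sqrt (lam - 1) * t) ≠ 0 ∧
    t * (deriv K1 t / K1 t +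
      (1 / Real.sqrt (lam - 1)) *
        (deriv J1 (Real.sqrt (lam - 1) * t) / J1 (Real.sqrt (lam - 1) * t))) = lam / (lam - 1)}

/-- The smallest positive solution `a = a(λ)`. -/
def aLam (lam : ℝ) : ℝ := sInf (aSet lam)

/-- The stream function `Ψ_L^{λ,W}` of the Lamb dipole, written in polar coordinates
`x₁ = r cos θ`, `x₂ = r sin θ` (so that `sin θ = x₂ / r`). -/
def PsiL (lam W : ℝ) (x : ℝ × ℝ) : ℝ :=
  if rad x ≤ aLam lam then
    ((-(W * aLam lam / (lam - 1)) / J1 (Real.sqrt (lam - 1) * aLam lam)) *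
        J1 (Real.sqrt (lam - 1) * rad x) + (W * lam / (lam - 1)) * rad x) * (x.2 / rad x)
  else (W * aLam lam / K1 (aLam lam)) * K1 (rad x) * (x.2 / rad x)

/-- The Lamb dipole `ω_L^{λ,W} = λ (Ψ_L^{λ,W} − W x₂)₊` restricted to `Π`. -/
def omegaL (lam W : ℝ) (x : ℝ × ℝ) : ℝ :=
  if 0 < x.2 then lam * max (PsiL lam W x - W * x.2) 0 else 0

/-- `ϱ(λ) = (∫_Π ω_L^{λ,1} dx) / I(ω_L^{λ,1})`. -/
def varrho (lam : ℝ) : ℝ := (∫ x in UHP, omegaL lam 1 x) / impulse (omegaL lam 1)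

/-- The Laplacian on `ℝ²`, written coordinatewise. -/
def lap (ψ : ℝ × ℝ → ℝ) (x : ℝ × ℝ) : ℝ :=
  deriv (deriv fun t => ψ (t, x.2)) x.1 + deriv (deriv fun t => ψ (x.1, t)) x.2

/-- Distance (in `L¹ ∩ L²` plus weighted `L¹`) from `ζ` to a set of functions `S`. -/
def distToSet (S : Set ((ℝ × ℝ) → ℝ)) (ζ : (ℝ × ℝ) → ℝ) : ℝ :=
  sInf {d | ∃ ω ∈ S, d = normL1 (fun x => ζ x - ω x) + normL2 (fun x => ζ x - ω x) +
    normL1 (fun x => x.2 * (ζ x - ω x))}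

end

/-!
Both `G(x,y)` and `G(x̄,y)` lie in `[0, κ / √|x - y|]`, where `κ = √π / (2π)` and `|·|` is the
sup norm (dominated by the Euclidean one), by `cosh t ≥ t²/4` and a Gaussian integral; hence
`|𝒢ω(x)| ≤ κ ∫ ω(y) |x - y|^{-1/2} dy`. Split at `|x - y| = δ`: far away the integrand is at most
`ω / √δ`, while near `x` the AM-GM inequality `ω / √r ≤ t / (2r) + ω² / (2t)` reduces matters to
`∫_{|z| < δ} |z|⁻¹ dz = 8δ`. So `|𝒢ω(x)| ≤ κ (4tδ + ‖ω‖₂² / (2t) + ‖ω‖₁ / √δ)`, and optimizing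
in `δ` and `t` gives `(11/2) κ ‖ω‖₁^{1/2} ‖ω‖₂^{1/2}`.
-/

open Set Metric

lemma sq_div_four_le_cosh {t : ℝ} (ht : 0 ≤ t) : t ^ 2 / 4 ≤ cosh t := by
  rw [cosh_eq]
  nlinarith [quadratic_le_exp_of_nonneg ht, exp_pos (-t)]

lemma K0_nonneg (r : ℝ) : 0 ≤ K0 r :=
  integral_nonneg fun _ ↦ (exp_pos _).le

lemma K0_le_of_le {r s : ℝ} (hr : 0 < r) (hrs : r ≤ s) : K0 s ≤ √π / √r := by
  have hexp : ∀ t ∈ Ioi (0 : ℝ), exp (-(s * cosh t)) ≤ exp (-(r / 4) * t ^ 2) := by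
    intro t ht
    refine exp_le_exp.2 ?_
    nlinarith [sq_div_four_le_cosh (le_of_lt ht),
      mul_le_mul_of_nonneg_right hrs (zero_le_one.trans (one_le_cosh t))]
  calc K0 s ≤ ∫ t in Ioi (0 : ℝ), exp (-(r / 4) * t ^ 2) :=
        integral_mono_of_nonneg (ae_of_all _ fun _ ↦ (exp_pos _).le)
          (integrable_exp_neg_mul_sq (by positivity)).integrableOn
          (ae_restrict_of_forall_mem measurableSet_Ioi hexp)
    _ = √π / √r := by
        rw [integral_gaussian_Ioi, show π / (r / 4) = 2 ^ 2 * π / r by ring,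
          sqrt_div' _ hr.le, sqrt_mul' _ pi_pos.le, sqrt_sq zero_le_two]
        ring

lemma Gker_nonneg (x y : ℝ × ℝ) : 0 ≤ Gker x y :=
  mul_nonneg (by positivity) (K0_nonneg _)

lemma Gker_le_of_le_rad {x y : ℝ × ℝ} {r : ℝ} (hr : 0 < r) (h : r ≤ rad (x - y)) :
    Gker x y ≤ √π / (2 * π) / √r :=
  (mul_le_mul_of_nonneg_left (K0_le_of_le hr h) (by positivity)).trans_eq (by ring)

lemma norm_le_rad (u : ℝ × ℝ) : ‖u‖ ≤ rad u := by
  rw [Prod.norm_def, Real.norm_eq_abs, Real.norm_eq_abs, ← sqrt_sq_eq_abs, ← sqrt_sq_eq_abs]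
  exact max_le (sqrt_le_sqrt (by nlinarith)) (sqrt_le_sqrt (by nlinarith))

lemma rad_sub_le_rad_reflPt_sub {x y : ℝ × ℝ} (hx : 0 < x.2) (hy : 0 < y.2) :
    rad (x - y) ≤ rad (reflPt x - y) :=
  sqrt_le_sqrt (by simp only [reflPt, Prod.fst_sub, Prod.snd_sub]; nlinarith)

lemma abs_GUHP_le {x y : ℝ × ℝ} (hx : 0 < x.2) (hy : 0 < y.2) (hxy : x ≠ y) :
    |GUHP x y| ≤ √π / (2 * π) / √‖x - y‖ := by
  have hr : 0 < ‖x - y‖ := norm_pos_iff.2 (sub_ne_zero.2 hxy)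
  have hrad := norm_le_rad (x - y)
  exact abs_sub_le_of_nonneg_of_le (Gker_nonneg _ _) (Gker_le_of_le_rad hr hrad) (Gker_nonneg _ _)
    (Gker_le_of_le_rad hr (hrad.trans (rad_sub_le_rad_reflPt_sub hx hy)))

lemma radial_indicator_inv_eqOn {δ : ℝ} :
    EqOn (fun y : ℝ ↦ y ^ (Module.finrank ℝ (ℝ × ℝ) - 1) • (Iio δ).indicator (·⁻¹) y)
      ((Iio δ).indicator 1) (Ioi 0) := by
  intro y (hy : 0 < y)
  by_cases h : y < δ <;> simp [h, hy.ne']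

lemma integrable_indicator_inv_norm (δ : ℝ) :
    Integrable (fun z : ℝ × ℝ ↦ (Iio δ).indicator (·⁻¹) ‖z‖) := by
  rw [integrable_fun_norm_addHaar,
    integrableOn_congr_fun radial_indicator_inv_eqOn measurableSet_Ioi, IntegrableOn, integrable_indicator_iff measurableSet_Iio]
  refine integrableOn_const ?_
  rw [Measure.restrict_apply measurableSet_Iio, Iio_inter_Ioi]
  simp

lemma integral_indicator_inv_norm {δ : ℝ} (hδ : 0 ≤ δ) :
    ∫ z : ℝ × ℝ, (Iio δ).indicator (·⁻¹) ‖z‖ = 8 * δ := by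
  have hball : (volume : Measure (ℝ × ℝ)).real (ball 0 1) = 4 := by
    rw [Measure.real, show (0 : ℝ × ℝ) = ((0 : ℝ), (0 : ℝ)) from rfl, ← ball_prod_same,
      Measure.volume_eq_prod, Measure.prod_prod, Real.volume_ball]
    norm_num
  have hradial : ∫ y in Ioi (0 : ℝ), (Iio δ).indicator 1 y = δ := by
    rw [integral_indicator_one measurableSet_Iio, Measure.real,
      Measure.restrict_apply measurableSet_Iio, Iio_inter_Ioi, Real.volume_Ioo, sub_zero,
      ENNReal.toReal_ofReal hδ]
  rw [integral_fun_norm_addHaar, setIntegral_congr_fun measurableSet_Ioi radial_indicator_inv_eqOn,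
    hradial, hball]
  simp only [Module.finrank_prod, Module.finrank_self, Nat.reduceAdd, smul_eq_mul, nsmul_eq_mul,
    Nat.cast_ofNat]
  ring

lemma div_sqrt_le_near_add_far {r w δ t : ℝ} (hr : 0 < r) (hw : 0 ≤ w) (hδ : 0 < δ)
    (ht : 0 < t) :
    w / √r ≤ t / 2 * (Iio δ).indicator (·⁻¹) r + w ^ 2 / (2 * t) + w / √δ := by
  by_cases hrδ : r < δ
  · have hamgm : t / 2 * r⁻¹ + w ^ 2 / (2 * t) - w / √r = (t - w * √r) ^ 2 / (2 * t * r) := by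
      field_simp
      linear_combination (2 * t * w - w ^ 2 * √r) * sq_sqrt hr.le
    rw [indicator_of_mem (show r ∈ Iio δ from hrδ)]
    linarith [div_nonneg hw (sqrt_nonneg δ), div_nonneg (sq_nonneg (t - w * √r))
      (by positivity : (0 : ℝ) ≤ 2 * t * r)]
  · rw [indicator_of_notMem (show r ∉ Iio δ from hrδ), mul_zero, zero_add]
    have hfar : w / √r ≤ w / √δ :=
      div_le_div_of_nonneg_left hw (sqrt_pos.2 hδ) (sqrt_le_sqrt (not_lt.1 hrδ))
    linarith [div_nonneg (sq_nonneg w) (by positivity : (0 : ℝ) ≤ 2 * t)]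

lemma measurableSet_UHP : MeasurableSet UHP :=
  measurableSet_lt measurable_const measurable_snd

lemma abs_Gop_le {ω : ℝ × ℝ → ℝ} (hω : NonnegL1L2 ω) {x : ℝ × ℝ} (hx : x ∈ UHP) {δ t : ℝ}
    (hδ : 0 < δ) (ht : 0 < t) :
    |Gop ω x| ≤ √π / (2 * π) *
      (4 * t * δ + (∫ y in UHP, ω y ^ 2) / (2 * t) + (∫ y in UHP, ω y) / √δ) := by
  obtain ⟨hω0, hω1, hω2⟩ := hω
  set k : ℝ × ℝ → ℝ := fun y ↦ (Iio δ).indicator (·⁻¹) ‖x - y‖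
  have hk : Integrable k := (integrable_indicator_inv_norm δ).comp_sub_left x
  have hk_int : t / 2 * ∫ y in UHP, k y ≤ 4 * t * δ := by
    suffices ∫ y in UHP, k y ≤ 8 * δ by nlinarith
    rw [← integral_indicator_inv_norm hδ.le,
      ← integral_sub_left_eq_self (fun z ↦ (Iio δ).indicator (·⁻¹) ‖z‖) volume x]
    refine setIntegral_le_integral hk (ae_of_all _ fun y ↦ ?_)
    simp only [k, indicator_apply]
    split_ifs <;> positivity
  have hk' : IntegrableOn (fun y ↦ t / 2 * k y) UHP := hk.integrableOn.const_mul _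
  have hω2' : IntegrableOn (fun y ↦ ω y ^ 2 / (2 * t)) UHP := hω2.div_const _
  have hω1' : IntegrableOn (fun y ↦ ω y / √δ) UHP := hω1.div_const _
  have hkω2 : IntegrableOn (fun y ↦ t / 2 * k y + ω y ^ 2 / (2 * t)) UHP := hk'.add hω2'
  have hg : IntegrableOn (fun y ↦ t / 2 * k y + ω y ^ 2 / (2 * t) + ω y / √δ) UHP :=
    hkω2.add hω1'
  have hbound : ∀ᵐ y ∂volume.restrict UHP, ‖GUHP x y * ω y‖ ≤
      √π / (2 * π) * (t / 2 * k y + ω y ^ 2 / (2 * t) + ω y / √δ) := by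
    filter_upwards [ae_restrict_mem measurableSet_UHP, ae_restrict_of_ae (Measure.ae_ne volume x)]
      with y hy hyx
    have hxy : 0 < ‖x - y‖ := norm_pos_iff.2 (sub_ne_zero.2 (Ne.symm hyx))
    rw [norm_mul, Real.norm_eq_abs, Real.norm_of_nonneg (hω0 y hy)]
    calc |GUHP x y| * ω y ≤ √π / (2 * π) / √‖x - y‖ * ω y :=
          mul_le_mul_of_nonneg_right (abs_GUHP_le hx hy (Ne.symm hyx)) (hω0 y hy)
      _ = √π / (2 * π) * (ω y / √‖x - y‖) := by ring
      _ ≤ _ := mul_le_mul_of_nonneg_left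
          (div_sqrt_le_near_add_far hxy (hω0 y hy) hδ ht) (by positivity)
  calc |Gop ω x| ≤ ∫ y in UHP, √π / (2 * π) * (t / 2 * k y + ω y ^ 2 / (2 * t) + ω y / √δ) :=
        norm_integral_le_of_norm_le (hg.const_mul _) hbound
    _ = √π / (2 * π) * (t / 2 * (∫ y in UHP, k y) + (∫ y in UHP, ω y ^ 2) / (2 * t) +
          (∫ y in UHP, ω y) / √δ) := by
        rw [integral_const_mul, integral_add hkω2 hω1', integral_add hk' hω2',
          integral_const_mul, integral_div, integral_div]
    _ ≤ _ := by gcongr _ * (?_ + _ + _)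

lemma Gop_eq_zero_of_ae_eq_zero {ω : ℝ × ℝ → ℝ} (h : ω =ᵐ[volume.restrict UHP] 0) (x : ℝ × ℝ) :
    Gop ω x = 0 :=
  integral_eq_zero_of_ae (h.mono fun y hy ↦ by simp [hy])

lemma abs_Gop_le_sqrt_mul_sqrt_sqrt {ω : ℝ × ℝ → ℝ} (hω : NonnegL1L2 ω) {x : ℝ × ℝ}
    (hx : x ∈ UHP) :
    |Gop ω x| ≤ 11 / 2 * (√π / (2 * π)) * √(∫ y in UHP, ω y) * √√(∫ y in UHP, ω y ^ 2) := by
  have hω0 : 0 ≤ᵐ[volume.restrict UHP] ω := ae_restrict_of_forall_mem measurableSet_UHP hω.1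
  rcases (setIntegral_nonneg measurableSet_UHP hω.1).eq_or_lt with hA | hA
  · rw [Gop_eq_zero_of_ae_eq_zero ((integral_eq_zero_iff_of_nonneg_ae hω0 hω.2.1).1 hA.symm)]
    simp [← hA]
  rcases (setIntegral_nonneg measurableSet_UHP fun y _ ↦ sq_nonneg (ω y)).eq_or_lt with hB | hB
  · have hω2 := (integral_eq_zero_iff_of_nonneg_ae (ae_of_all _ fun y ↦ sq_nonneg (ω y))
      hω.2.2).1 hB.symm
    rw [Gop_eq_zero_of_ae_eq_zero (hω2.mono fun y hy ↦ pow_eq_zero_iff two_ne_zero |>.1 hy)]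
    simp [← hB]
  set a := √(∫ y in UHP, ω y)
  set b := √√(∫ y in UHP, ω y ^ 2)
  have ha : 0 < a := sqrt_pos.2 hA
  have hb : 0 < b := sqrt_pos.2 (sqrt_pos.2 hB)
  have hA' : ∫ y in UHP, ω y = a ^ 2 := (sq_sqrt hA.le).symm
  have hB' : ∫ y in UHP, ω y ^ 2 = b ^ 4 := by
    rw [show 4 = 2 * 2 from rfl, pow_mul, sq_sqrt (sqrt_nonneg _), sq_sqrt hB.le]
  -- `δ = ‖ω‖₁ / ‖ω‖₂` balances the far field against the near field, `t` optimizes AM-GM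
  refine (abs_Gop_le hω hx (δ := (a / b) ^ 2) (t := b ^ 3 / a) (by positivity)
    (by positivity)).trans_eq ?_
  rw [hA', hB', sqrt_sq (by positivity)]
  field_simp
  ring

/-- uniform bound `‖𝒢ω‖_∞ ≤ C ‖ω‖₁^{1/2} ‖ω‖₂^{1/2}`. -/
theorem stmt0 :
    ∃ C : ℝ, 0 < C ∧ ∀ ω : ℝ × ℝ → ℝ, NonnegL1L2 ω →
      ∀ x ∈ UHP, |Gop ω x| ≤ C * normL1 ω ^ ((1 : ℝ) / 2) * normL2 ω ^ ((1 : ℝ) / 2) := by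
  refine ⟨11 / 2 * (√π / (2 * π)), by positivity, fun ω hω x hx ↦ ?_⟩
  have hL1 : normL1 ω = ∫ y in UHP, ω y :=
    setIntegral_congr_fun measurableSet_UHP fun y hy ↦ abs_of_nonneg (hω.1 y hy)
  rw [hL1, normL2, ← sqrt_eq_rpow, ← sqrt_eq_rpow, ← sqrt_eq_rpow]
  exact abs_Gop_le_sqrt_mul_sqrt_sqrt hω hx
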